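/- arXiv:0805.3853 — 3 statements merged into one kernel-verified Lean document; each statement's English description precedes it below -/
import Mathlib

section
/- For every real increment h, every natural number n, every p ≥ 1, and all real numbers z_1, …, z_p, the generalized multinomial theorem for rising factorials holds: (z_1 + ⋯ + z_p)_{n↑h} = ∑ (n! / (n_1!⋯n_p!)) · ∏_{j=1}^p (z_j)_{n_j↑h}, where the sum ranges over all p-tuples (n_1,…,n_p) of nonnegative integers with n_1 + ⋯ + n_p = n. -/
/-- Generalized rising factorial `(x)_{n↑h} = ∏_{i=0}^{n-1} (x + i·h)`. -/
noncomputable def risefac (x h : ℝ) (n : ℕ) : ℝ := ∏ i ∈ Finset.range n, (x + i * h)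

/-!
The rising factorials satisfy the Vandermonde identity
`(x + y)_{n↑h} = ∑_{i+j=n} C(n,i) (x)_{i↑h} (y)_{j↑h}`: in the step `n → n + 1` the new factor
`x + y + n·h` splits as `(x + i·h) + (y + j·h)` on the antidiagonal `i + j = n`, and Pascal's rule
recombines the two halves. Any family satisfying such a binomial identity satisfies the
multinomial one, by induction on the number of summands, because the multinomial coefficient of
`(i, f₁, …, f_p)` is `C(n, i)` times that of `(f₁, …, f_p)`.
-/

open Finset Finset.Nat
open scoped Nat

theorem Nat.multinomial_univ_fin_cons {p : ℕ} (a : ℕ) (f : Fin p → ℕ) :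
    Nat.multinomial univ (Fin.cons a f : Fin (p + 1) → ℕ) =
      (a + ∑ i, f i).choose a * Nat.multinomial univ f := by
  rw [Fin.univ_succ, Nat.multinomial_cons]
  simp [Nat.multinomial, Finset.sum_map, Finset.prod_map]

theorem Nat.cast_multinomial {K ι : Type*} [Semifield K] [CharZero K] (s : Finset ι)
    (f : ι → ℕ) :
    (Nat.multinomial s f : K) = ((∑ i ∈ s, f i)! : K) / ∏ i ∈ s, ((f i)! : K) := by
  rw [eq_div_iff (by exact_mod_cast (Nat.prod_factorial_pos s f).ne'), mul_comm]
  exact_mod_cast Nat.multinomial_spec s f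

theorem Finset.Nat.sum_antidiagonalTuple_succ {M : Type*} [AddCommMonoid M] (p n : ℕ)
    (g : (Fin (p + 1) → ℕ) → M) :
    ∑ f ∈ antidiagonalTuple (p + 1) n, g f =
      ∑ ij ∈ antidiagonal n, ∑ f ∈ antidiagonalTuple p ij.2, g (Fin.cons ij.1 f) := by
  rw [sum_sigma']
  refine sum_nbij' (fun f => ⟨(f 0, ∑ i : Fin p, f i.succ), Fin.tail f⟩)
    (fun x => Fin.cons x.1.1 x.2) ?_ ?_ (fun f _ => Fin.cons_self_tail f) ?_
    (fun f _ => by rw [Fin.cons_self_tail])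
  · intro f hf
    simp_all [mem_antidiagonalTuple, Fin.sum_univ_succ, Fin.tail]
  · rintro ⟨⟨i, j⟩, f⟩ hf
    simp_all [mem_antidiagonalTuple, Fin.sum_univ_succ]
  · rintro ⟨⟨i, j⟩, f⟩ hf
    simp_all [mem_antidiagonalTuple]

/-- Sequences of binomial type in the sense of umbral calculus; the prototype is `r x n = x ^ n`. -/
structure IsBinomialType {R : Type*} [CommSemiring R] (r : R → ℕ → R) : Prop where
  apply_zero (n : ℕ) : r 0 n = if n = 0 then 1 else 0
  apply_add (x y : R) (n : ℕ) :
    r (x + y) n = ∑ ij ∈ antidiagonal n, n.choose ij.1 * (r x ij.1 * r y ij.2)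

theorem IsBinomialType.apply_sum {R : Type*} [CommSemiring R] {r : R → ℕ → R}
    (hr : IsBinomialType r) (p n : ℕ) (z : Fin p → R) :
    r (∑ j, z j) n =
      ∑ f ∈ antidiagonalTuple p n, Nat.multinomial univ f * ∏ j, r (z j) (f j) := by
  induction p generalizing n with
  | zero => cases n <;> simp [hr.apply_zero]
  | succ p ih =>
    rw [Fin.sum_univ_succ, hr.apply_add, sum_antidiagonalTuple_succ]
    refine sum_congr rfl fun ij hij => ?_
    rw [ih, mul_sum, mul_sum]
    refine sum_congr rfl fun f hf => ?_
    have hf : ∑ i, f i = ij.2 := mem_antidiagonalTuple.mp hf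
    have hij : ij.1 + ij.2 = n := mem_antidiagonal.mp hij
    rw [Nat.multinomial_univ_fin_cons, Fin.prod_univ_succ, hf, hij]
    simp only [Fin.cons_zero, Fin.cons_succ, Nat.cast_mul]
    ring

theorem risefac_succ (x h : ℝ) (n : ℕ) :
    risefac x h (n + 1) = risefac x h n * (x + n * h) :=
  prod_range_succ _ _

theorem isBinomialType_risefac (h : ℝ) : IsBinomialType fun x n => risefac x h n where
  apply_zero n := by
    cases n with
    | zero => simp [risefac]
    | succ n => simp [risefac, prod_range_succ']
  apply_add x y n := by
    induction n with
    | zero => simp [risefac]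
    | succ n ih =>
      rw [risefac_succ, ih, sum_mul, sum_antidiagonal_choose_succ_mul
        (fun i j => risefac x h i * risefac y h j) n, ← sum_add_distrib]
      refine sum_congr rfl fun ij hij => ?_
      have hij : ij.1 + ij.2 = n := mem_antidiagonal.mp hij
      rw [Nat.choose_symm_of_eq_add hij.symm, risefac_succ, risefac_succ, ← hij]
      push_cast
      ring

theorem risefac_multinomial_general (h : ℝ) (n p : ℕ) (z : Fin p → ℝ) :
    risefac (∑ j, z j) h n =
      ∑ f ∈ Finset.Nat.antidiagonalTuple p n,
        ((n.factorial : ℝ) / ∏ j, ((f j).factorial : ℝ)) * ∏ j, risefac (z j) h (f j) := by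
  rw [(isBinomialType_risefac h).apply_sum]
  refine sum_congr rfl fun f hf => ?_
  rw [Nat.cast_multinomial, mem_antidiagonalTuple.mp hf]

/-- Generalized multinomial theorem for rising factorials:
`(z_1 + ⋯ + z_p)_{n↑h} = ∑ (n! / (n_1!⋯n_p!)) ∏_j (z_j)_{n_j↑h}`,
the sum over nonnegative tuples with `n_1 + ⋯ + n_p = n`. -/
theorem risefac_multinomial (h : ℝ) (n p : ℕ) (hp : 1 ≤ p) (z : Fin p → ℝ) :
    risefac (∑ j, z j) h n =
      ∑ f ∈ Finset.Nat.antidiagonalTuple p n,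
        ((n.factorial : ℝ) / ∏ j, ((f j).factorial : ℝ)) * ∏ j, risefac (z j) h (f j) :=
  risefac_multinomial_general h n p z
end

section
/- For every function w : ℕ → ℝ and all integers 1 ≤ k ≤ n, the (n,k)-th partial Bell polynomial equals the corresponding sum over compositions: ∑_{{A_1,…,A_k}} ∏_{i=1}^k w(|A_i|) = (n!/k!) · ∑_{(n_1,…,n_k)} ∏_{i=1}^k w(n_i)/n_i!, where the left sum ranges over all partitions of the set {1,…,n} into k nonempty blocks and the right sum ranges over all k-tuples (n_1,…,n_k) of positive integers with n_1 + ⋯ + n_k = n. -/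
/-- `P` is a partition of `{1,…,n}` (modeled as `Fin n`) into nonempty blocks:
no empty block, pairwise disjoint blocks, and the union of the blocks is everything. -/
def isSetPartition {n : ℕ} (P : Finset (Finset (Fin n))) : Prop :=
  ∅ ∉ P ∧ (∀ A ∈ P, ∀ B ∈ P, A ≠ B → Disjoint A B) ∧ P.sup id = Finset.univ

instance {n : ℕ} (P : Finset (Finset (Fin n))) : Decidable (isSetPartition P) := by
  unfold isSetPartition; infer_instance

/-- The partitions of `{1,…,n}` into exactly `k` (nonempty) blocks. -/
def partitionsK (n k : ℕ) : Finset (Finset (Finset (Fin n))) :=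
  Finset.univ.filter (fun P => isSetPartition P ∧ P.card = k)

/-!
Both sides are `1/k!` times the sum of `∏ i, w |g⁻¹ i|` over the surjections `g : Fin n → Fin k`.
Grouping the surjections by their set of fibres gives `k!` times the partition sum, because the
surjections with a given partition into `k` blocks as fibres are its `k!` labellings
`Fin k ≃ blocks`. Grouping them by their fibre sizes `(n₁, …, nₖ)` gives the composition sum,
because by orbit–stabilizer for `Perm (Fin n)` acting by precomposition there are
`n! / (n₁! ⋯ nₖ!)` maps with these fibre sizes.
-/

open Finset Function Equiv Nat

section Fibers

variable {α ι : Type*} [Fintype α] [DecidableEq ι]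

def fiber (g : α → ι) (i : ι) : Finset α := {a | g a = i}

def fiberCard (g : α → ι) (i : ι) : ℕ := #(fiber g i)

def fibers [Fintype ι] [DecidableEq α] (g : α → ι) : Finset (Finset α) := univ.image (fiber g)

@[simp] lemma mem_fiber {g : α → ι} {i : ι} {a : α} : a ∈ fiber g i ↔ g a = i := by
  simp [fiber]

lemma fiberCard_eq_card_subtype (g : α → ι) (i : ι) :
    fiberCard g i = Fintype.card {a // g a = i} :=
  (Fintype.card_subtype _).symm

lemma sum_fiberCard [Fintype ι] (g : α → ι) : ∑ i, fiberCard g i = Fintype.card α :=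
  (card_eq_sum_card_fiberwise fun _ _ => mem_coe.2 (mem_univ _)).symm

lemma fiberCard_pos_iff {g : α → ι} {i : ι} : 0 < fiberCard g i ↔ ∃ a, g a = i := by
  simp [fiberCard, card_pos, Finset.Nonempty]

lemma injective_fiber_of_surjective {g : α → ι} (hg : Surjective g) : Injective (fiber g) := by
  intro i j hij
  obtain ⟨a, rfl⟩ := hg i
  exact mem_fiber.1 (hij ▸ mem_fiber.2 rfl : a ∈ fiber g j)

lemma prod_fibers [Fintype ι] [DecidableEq α] {M : Type*} [CommMonoid M] {g : α → ι}
    (hg : Surjective g) (F : Finset α → M) : ∏ A ∈ fibers g, F A = ∏ i, F (fiber g i) :=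
  prod_image fun _ _ _ _ h => injective_fiber_of_surjective hg h

lemma fiberCard_comp_perm (g : α → ι) (σ : Perm α) : fiberCard (g ∘ σ) = fiberCard g := by
  funext i
  simp only [fiberCard_eq_card_subtype]
  exact Fintype.card_congr (σ.subtypeEquiv fun _ => Iff.rfl)

lemma mem_orbit_iff_fiberCard_eq {g g' : α → ι} :
    g' ∈ MulAction.orbit (Perm α)ᵈᵐᵃ g ↔ fiberCard g' = fiberCard g := by
  constructor
  · rintro ⟨σ, rfl⟩
    exact fiberCard_comp_perm g _
  · intro h
    have e : ∀ i, {a // g' a = i} ≃ {a // g a = i} := fun i =>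
      Fintype.equivOfCardEq (by rw [← fiberCard_eq_card_subtype, ← fiberCard_eq_card_subtype, h])
    exact ⟨DomMulAct.mk (ofFiberEquiv e), funext fun a => ofFiberEquiv_map e a⟩

/-- Orbit–stabilizer for `Perm α` acting on `α → ι` by precomposition: the orbit of `g` consists
of the maps with the same fibre sizes, and the stabilizer is `∏ i, Perm (g⁻¹ i)`. -/
lemma card_fiberCard_eq_fiberCard_mul_prod_factorial [DecidableEq α] [Fintype ι] (g : α → ι) :
    #{g' : α → ι | fiberCard g' = fiberCard g} * ∏ i, (fiberCard g i)! = (Fintype.card α)! := by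
  have orbit :
      Nat.card (MulAction.orbit (Perm α)ᵈᵐᵃ g) = #{g' : α → ι | fiberCard g' = fiberCard g} := by
    rw [← Nat.card_eq_finsetCard]
    congr
    ext g'
    simp [mem_orbit_iff_fiberCard_eq]
  have stab : Nat.card (MulAction.stabilizer (Perm α)ᵈᵐᵃ g) = ∏ i, (fiberCard g i)! := by
    simp only [fiberCard_eq_card_subtype]
    rw [← DomMulAct.stabilizer_card, ← Nat.card_eq_fintype_card]
    exact Nat.card_congr (DomMulAct.mk.symm.subtypeEquiv fun _ => DomMulAct.mem_stabilizer_iff)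
  rw [← orbit, ← stab, ← Nat.card_prod,
    Nat.card_congr (MulAction.orbitProdStabilizerEquivGroup _ g), Nat.card_congr DomMulAct.mk.symm,
    Nat.card_perm, Nat.card_eq_fintype_card]

lemma exists_fiberCard_eq [Fintype ι] {f : ι → ℕ} (hf : ∑ i, f i = Fintype.card α) :
    ∃ g : α → ι, fiberCard g = f := by
  let e : α ≃ Σ i, Fin (f i) := Fintype.equivOfCardEq (by simp [hf])
  refine ⟨fun a => (e a).1, funext fun i => ?_⟩
  rw [fiberCard_eq_card_subtype,
    Fintype.card_congr (e.subtypeEquiv (q := fun s => s.1 = i) fun _ => Iff.rfl),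
    Fintype.card_congr (sigmaSubtype i), Fintype.card_fin]

lemma card_fiberCard_eq_mul_prod_factorial [DecidableEq α] [Fintype ι] {f : ι → ℕ}
    (hf : ∑ i, f i = Fintype.card α) :
    #{g : α → ι | fiberCard g = f} * ∏ i, (f i)! = (Fintype.card α)! := by
  obtain ⟨g, rfl⟩ := exists_fiberCard_eq hf
  exact card_fiberCard_eq_fiberCard_mul_prod_factorial g

end Fibers

namespace Finpartition

variable {α ι : Type*} [Fintype α] [DecidableEq α] [DecidableEq ι]
variable (Q : Finpartition (univ : Finset α))

def labelling (e : ι ≃ Q.parts) (a : α) : ι := e.symm ⟨Q.part a, Q.part_mem.2 (mem_univ a)⟩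

lemma fiber_labelling (e : ι ≃ Q.parts) (i : ι) : fiber (Q.labelling e) i = e i := by
  ext a
  simp [labelling, Equiv.symm_apply_eq, ← Subtype.coe_inj, Q.part_eq_iff_mem (e i).2]

lemma surjective_labelling (e : ι ≃ Q.parts) : Surjective (Q.labelling e) := by
  intro i
  obtain ⟨a, ha⟩ := Q.nonempty_of_mem_parts (e i).2
  rw [← fiber_labelling] at ha
  exact ⟨a, mem_fiber.1 ha⟩

lemma fibers_labelling [Fintype ι] (e : ι ≃ Q.parts) : fibers (Q.labelling e) = Q.parts := by
  ext A
  simp only [fibers, fiber_labelling, mem_image, mem_univ, true_and]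
  exact ⟨fun ⟨i, hi⟩ => hi ▸ (e i).2, fun hA => ⟨e.symm ⟨A, hA⟩, by simp⟩⟩

lemma labelling_injective : Injective (Q.labelling (ι := ι)) := by
  intro e e' h
  ext i : 2
  simpa [fiber_labelling] using congrArg (fiber · i) h

lemma exists_labelling_eq [Fintype ι] {g : α → ι} (hg : Surjective g) (h : fibers g = Q.parts) :
    ∃ e, Q.labelling e = g := by
  have mem_parts : ∀ i, fiber g i ∈ Q.parts := fun i => h ▸ mem_image_of_mem _ (mem_univ i)
  refine ⟨Equiv.ofBijective (fun i => ⟨_, mem_parts i⟩) ⟨fun i j hij => ?_, fun A => ?_⟩, ?_⟩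
  · exact injective_fiber_of_surjective hg (congrArg Subtype.val hij)
  · obtain ⟨i, -, hi⟩ := mem_image.1 (h.symm ▸ A.2 : A.1 ∈ fibers g)
    exact ⟨i, Subtype.ext hi⟩
  · funext a
    rw [labelling, Equiv.symm_apply_eq]
    ext1
    exact (Q.part_eq_iff_mem (mem_parts _)).2 (mem_fiber.2 rfl)

lemma card_filter_fibers_eq [Fintype ι] (hQ : #Q.parts = Fintype.card ι) :
    #{g : α → ι | Surjective g ∧ fibers g = Q.parts} = (Fintype.card ι)! := by
  have : ({g : α → ι | Surjective g ∧ fibers g = Q.parts} : Finset _) =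
      univ.map ⟨Q.labelling, Q.labelling_injective⟩ := by
    ext g
    simp only [mem_filter, mem_univ, true_and, mem_map, Embedding.coeFn_mk]
    refine ⟨fun ⟨hg, h⟩ => Q.exists_labelling_eq hg h, ?_⟩
    rintro ⟨e, rfl⟩
    exact ⟨Q.surjective_labelling e, Q.fibers_labelling e⟩
  rw [this, card_map, Finset.card_univ,
    Fintype.card_equiv (Fintype.equivOfCardEq (by rw [Fintype.card_coe, hQ]))]

end Finpartition

section Partitions

variable {n : ℕ} {ι : Type*} [Fintype ι] [DecidableEq ι]

lemma isSetPartition.exists_finpartition {P : Finset (Finset (Fin n))} (hP : isSetPartition P) :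
    ∃ Q : Finpartition (univ : Finset (Fin n)), Q.parts = P :=
  ⟨⟨P, supIndep_iff_pairwiseDisjoint.2 fun A hA B hB hAB => hP.2.1 A hA B hB hAB, hP.2.2, hP.1⟩,
    rfl⟩

lemma fibers_mem_partitionsK {g : Fin n → ι} (hg : Surjective g) :
    fibers g ∈ partitionsK n (Fintype.card ι) := by
  refine mem_filter.2 ⟨mem_univ _, ⟨fun h => ?_, ?_, ?_⟩, ?_⟩
  · obtain ⟨i, -, hi⟩ := mem_image.1 h
    obtain ⟨a, ha⟩ := hg i
    simpa [hi] using (mem_fiber.2 ha : a ∈ fiber g i)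
  · simp only [fibers, mem_image, mem_univ, true_and]
    rintro _ ⟨i, rfl⟩ _ ⟨j, rfl⟩ hij
    exact disjoint_filter.2 fun a _ hi hj => hij (by rw [← hi, ← hj])
  · exact eq_univ_of_forall fun a =>
      mem_sup.2 ⟨fiber g (g a), mem_image_of_mem _ (mem_univ _), by simp⟩
  · exact (card_image_of_injective _ (injective_fiber_of_surjective hg)).trans (Finset.card_univ)

lemma sum_surjective_fibers {M : Type*} [AddCommMonoid M] (F : Finset (Finset (Fin n)) → M) :
    ∑ g : Fin n → ι with Surjective g, F (fibers g)
      = (Fintype.card ι)! • ∑ P ∈ partitionsK n (Fintype.card ι), F P := by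
  rw [← sum_fiberwise_of_maps_to fun g hg => fibers_mem_partitionsK (mem_filter.1 hg).2, smul_sum]
  refine sum_congr rfl fun P hP => ?_
  simp only [partitionsK, mem_filter, mem_univ, true_and] at hP
  obtain ⟨Q, rfl⟩ := hP.1.exists_finpartition
  rw [sum_congr rfl fun g hg => by rw [(mem_filter.1 hg).2], sum_const, filter_filter,
    Q.card_filter_fibers_eq hP.2]

end Partitions

lemma sum_surjective_fiberCard {α M : Type*} [Fintype α] [DecidableEq α] [AddCommMonoid M]
    {k : ℕ} (F : (Fin k → ℕ) → M) :
    ∑ g : α → Fin k with Surjective g, F (fiberCard g)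
      = ∑ f ∈ (Nat.antidiagonalTuple k (Fintype.card α)).filter (fun f => ∀ i, 0 < f i),
          #{g : α → Fin k | fiberCard g = f} • F f := by
  have maps : ∀ g ∈ ({g : α → Fin k | Surjective g} : Finset _),
      fiberCard g ∈ (Nat.antidiagonalTuple k (Fintype.card α)).filter (fun f => ∀ i, 0 < f i) := by
    intro g hg
    simp only [mem_filter, mem_univ, true_and, Nat.mem_antidiagonalTuple] at hg ⊢
    exact ⟨sum_fiberCard g, fun i => fiberCard_pos_iff.2 (hg i)⟩
  rw [← sum_fiberwise_of_maps_to maps]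
  refine sum_congr rfl fun f hf => ?_
  rw [sum_congr rfl fun g hg => by rw [(mem_filter.1 hg).2], sum_const, filter_filter]
  congr 3
  ext g
  refine ⟨fun h => h.2, fun h => ⟨fun i => fiberCard_pos_iff.1 ?_, h⟩⟩
  exact h ▸ (mem_filter.1 hf).2 i

theorem bell_polynomial_eq_composition_sum_general (w : ℕ → ℝ) (n k : ℕ) :
    ∑ P ∈ partitionsK n k, ∏ A ∈ P, w A.card
      = ((n.factorial : ℝ) / k.factorial) *
          ∑ f ∈ (Finset.Nat.antidiagonalTuple k n).filter (fun f => ∀ i, 0 < f i),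
            ∏ i, w (f i) / (f i).factorial := by
  have hk : (k ! : ℝ) ≠ 0 := by positivity
  rw [← mul_right_inj' hk, ← mul_assoc, mul_div_cancel₀ _ hk]
  calc (k ! : ℝ) * ∑ P ∈ partitionsK n k, ∏ A ∈ P, w #A
      = ∑ g : Fin n → Fin k with Surjective g, ∏ A ∈ fibers g, w #A := by
        simpa using (sum_surjective_fibers (ι := Fin k) fun P => ∏ A ∈ P, w #A).symm
    _ = ∑ g : Fin n → Fin k with Surjective g, ∏ i, w (fiberCard g i) :=
        sum_congr rfl fun g hg => prod_fibers (mem_filter.1 hg).2 _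
    _ = _ := by
        rw [sum_surjective_fiberCard fun f => ∏ i, w (f i), Fintype.card_fin, mul_sum]
        refine sum_congr rfl fun f hf => ?_
        have count := card_fiberCard_eq_mul_prod_factorial (α := Fin n) (f := f)
          (by simpa using Nat.mem_antidiagonalTuple.1 (mem_filter.1 hf).1)
        rw [Fintype.card_fin] at count
        rw [nsmul_eq_mul, prod_div_distrib, ← count]
        push_cast
        field_simp

/-- The `(n,k)`-th partial Bell polynomial as a sum over set partitions equals the
corresponding sum over compositions:
`∑_{{A_1,…,A_k}} ∏_i w(|A_i|) = (n!/k!) ∑_{(n_1,…,n_k)} ∏_i w(n_i)/n_i!`,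
the right sum over positive tuples with `n_1 + ⋯ + n_k = n`. -/
theorem bell_polynomial_eq_composition_sum (w : ℕ → ℝ) (n k : ℕ) (hk : 1 ≤ k) (hn : k ≤ n) :
    ∑ P ∈ partitionsK n k, ∏ A ∈ P, w A.card
      = ((n.factorial : ℝ) / k.factorial) *
          ∑ f ∈ (Finset.Nat.antidiagonalTuple k n).filter (fun f => ∀ i, 0 < f i),
            ∏ i, w (f i) / (f i).factorial :=
  bell_polynomial_eq_composition_sum_general w n k
end

section
/- For every real α with 0 < α < 1, every natural number n, and every real number y: (yα)_{n↑} = ∑_{k=0}^{n} S_{n,k}^{-1,-α} · α^k · (y)_{k↑}; equivalently, the generalized factorial coefficients C(n,k;α), defined as the connection coefficients in (αy)_{n↑} = ∑_{k=0}^n C(n,k;α)(y)_{k↑}, satisfy S_{n,k}^{-1,-α} = C(n,k;α)/α^k. -/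
/-- Generalized Stirling number `S_{n,k}^{-1,-α} = (n!/k!) ∑ ∏_j (1-α)_{n_j-1↑}/n_j!`,
the sum over positive tuples `(n_1,…,n_k)` with sum `n`. -/
noncomputable def genStirling (α : ℝ) (n k : ℕ) : ℝ :=
  ((n.factorial : ℝ) / k.factorial) *
    ∑ f ∈ (Finset.Nat.antidiagonalTuple k n).filter (fun f => ∀ i, 0 < f i),
      ∏ j, risefac (1 - α) 1 (f j - 1) / (f j).factorial

/-!
Let `G = ∑_{m ≥ 1} (1-α)_{m-1↑} X^m / m!`, i.e. `G = (1 - (1-X)^α)/α`. Expanding `G^k` shows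
`S_{n,k}^{-1,-α} = (n!/k!) [X^n] G^k`, and `(1-X) G' = 1 - αG` turns into the triangular
recurrence `S_{n+1,k+1} = S_{n,k} + (n - (k+1)α) S_{n,k+1}`. This is exactly the recurrence
produced by multiplying `∑_k S_{n,k} α^k (y)_{k↑}` by `yα + n`, using
`(y)_{k↑} (yα + n) = α (y)_{k+1↑} + (n - kα) (y)_{k↑}`, which proves the expansion by induction
on `n`. The coefficients of such an expansion are unique: evaluating at `y = 0, -1, -2, …`
isolates them one at a time, since `(-m)_{j↑} = 0` exactly when `m < j`.
-/

open Finset PowerSeries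

theorem risefac_one_succ (x : ℝ) (n : ℕ) : risefac x 1 (n + 1) = risefac x 1 n * (x + n) := by
  simp [risefac, prod_range_succ]

theorem risefac_neg_natCast_eq_zero_iff {m k : ℕ} : risefac (-m) 1 k = 0 ↔ m < k := by
  simp [risefac, prod_eq_zero_iff, neg_add_eq_zero]

theorem eq_zero_of_forall_sum_mul_risefac_eq_zero {N : ℕ} {d : ℕ → ℝ}
    (h : ∀ y, ∑ j ∈ range N, d j * risefac y 1 j = 0) : ∀ m < N, d m = 0 := by
  intro m
  induction m using Nat.strong_induction_on with
  | _ m ih =>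
    intro hm
    have hsingle : ∑ j ∈ range N, d j * risefac (-m) 1 j = d m * risefac (-m) 1 m := by
      refine sum_eq_single_of_mem m (mem_range.2 hm) fun j _ hne => ?_
      rcases hne.lt_or_gt with hlt | hgt
      · rw [ih j hlt (hlt.trans hm), zero_mul]
      · rw [risefac_neg_natCast_eq_zero_iff.2 hgt, mul_zero]
    have hne : risefac (-m) 1 m ≠ 0 := by simp [risefac_neg_natCast_eq_zero_iff]
    have hm0 := h (-m)
    rw [hsingle] at hm0
    exact (mul_eq_zero.1 hm0).resolve_right hne

theorem coeff_pow_eq_sum_antidiagonalTuple {R : Type*} [CommSemiring R] (φ : R⟦X⟧) (k n : ℕ) :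
    coeff n (φ ^ k) = ∑ f ∈ Nat.antidiagonalTuple k n, ∏ i, coeff (f i) φ := by
  rw [← piAntidiag_univ_fin_eq_antidiagonalTuple, ← Fin.prod_const, coeff_prod, finsuppAntidiag,
    sum_map]
  exact sum_attach _ fun f : Fin k → ℕ => ∏ i, coeff (f i) φ

noncomputable def genStirlingSeries (α : ℝ) : ℝ⟦X⟧ :=
  mk fun m => if m = 0 then 0 else risefac (1 - α) 1 (m - 1) / m.factorial

theorem genStirling_eq_coeff_pow (α : ℝ) (n k : ℕ) :
    genStirling α n k = n.factorial / k.factorial * coeff n (genStirlingSeries α ^ k) := by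
  have hpos : ∀ f ∈ Nat.antidiagonalTuple k n,
      ∏ i, coeff (f i) (genStirlingSeries α) ≠ 0 → ∀ i, 0 < f i := fun f _ hf i =>
    Nat.pos_of_ne_zero fun hi => hf (prod_eq_zero (mem_univ i) (by simp [genStirlingSeries, hi]))
  rw [genStirling, coeff_pow_eq_sum_antidiagonalTuple, ← sum_filter_of_ne hpos]
  refine congrArg _ (sum_congr rfl fun f hf => prod_congr rfl fun i _ => ?_)
  simp [genStirlingSeries, ((mem_filter.1 hf).2 i).ne']

theorem one_sub_X_mul_derivative_genStirlingSeries (α : ℝ) :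
    (1 - X) * d⁄dX ℝ (genStirlingSeries α) = 1 - C α * genStirlingSeries α := by
  ext (_ | m)
  · rw [sub_mul, one_mul, map_sub, map_sub, coeff_zero_X_mul, coeff_derivative]
    simp [genStirlingSeries, risefac]
  · simp [sub_mul, coeff_succ_X_mul, coeff_derivative, coeff_one, genStirlingSeries,
      risefac_one_succ, Nat.factorial_succ]
    field_simp
    ring

theorem one_sub_X_mul_derivative_genStirlingSeries_pow (α : ℝ) (k : ℕ) :
    (1 - X) * d⁄dX ℝ (genStirlingSeries α ^ (k + 1)) =
      (k + 1 : ℕ) • (genStirlingSeries α ^ k - C α * genStirlingSeries α ^ (k + 1)) := by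
  rw [Derivation.leibniz_pow, Nat.add_sub_cancel, smul_eq_mul, nsmul_eq_mul, nsmul_eq_mul]
  linear_combination ((k + 1 : ℕ) * genStirlingSeries α ^ k) *
    one_sub_X_mul_derivative_genStirlingSeries α

theorem coeff_succ_genStirlingSeries_pow_succ (α : ℝ) (n k : ℕ) :
    (n + 1) * coeff (n + 1) (genStirlingSeries α ^ (k + 1)) =
      (k + 1) * coeff n (genStirlingSeries α ^ k) +
        (n - (k + 1) * α) * coeff n (genStirlingSeries α ^ (k + 1)) := by
  have h := congrArg (coeff n) (one_sub_X_mul_derivative_genStirlingSeries_pow α k)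
  rw [sub_mul, one_mul, map_sub, map_nsmul, map_sub, coeff_C_mul, coeff_derivative,
    nsmul_eq_mul] at h
  rcases n with _ | n
  · rw [coeff_zero_X_mul] at h
    push_cast at h ⊢
    linarith
  · rw [coeff_succ_X_mul, coeff_derivative] at h
    push_cast at h ⊢
    linarith

theorem genStirling_zero_zero (α : ℝ) : genStirling α 0 0 = 1 := by
  simp [genStirling_eq_coeff_pow]

theorem genStirling_succ_zero (α : ℝ) (n : ℕ) : genStirling α (n + 1) 0 = 0 := by
  simp [genStirling_eq_coeff_pow, coeff_one]

theorem genStirling_eq_zero_of_lt (α : ℝ) {n k : ℕ} (h : n < k) : genStirling α n k = 0 := by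
  have hX : X ^ k ∣ genStirlingSeries α ^ k :=
    pow_dvd_pow_of_dvd (X_dvd_iff.2 (by simp [genStirlingSeries])) k
  simp [genStirling_eq_coeff_pow, X_pow_dvd_iff.1 hX n h]

theorem genStirling_succ_succ (α : ℝ) (n k : ℕ) :
    genStirling α (n + 1) (k + 1) =
      genStirling α n k + (n - (k + 1) * α) * genStirling α n (k + 1) := by
  simp only [genStirling_eq_coeff_pow, Nat.factorial_succ, Nat.cast_mul, Nat.cast_succ]
  field_simp
  exact coeff_succ_genStirlingSeries_pow_succ α n k

theorem sum_range_succ_comp_succ_eq_sum_range {M : Type*} [AddCommMonoid M] {f : ℕ → M} {n : ℕ}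
    (h0 : f 0 = 0) (hn : f (n + 1) = 0) :
    ∑ k ∈ range (n + 1), f (k + 1) = ∑ k ∈ range (n + 1), f k := by
  have h := (sum_range_succ' f (n + 1)).symm.trans (sum_range_succ f (n + 1))
  rwa [h0, hn, add_zero, add_zero] at h

theorem risefac_mul_eq_sum_genStirling (α y : ℝ) (n : ℕ) :
    risefac (y * α) 1 n = ∑ k ∈ range (n + 1), genStirling α n k * α ^ k * risefac y 1 k := by
  induction n with
  | zero => simp [risefac, genStirling_zero_zero]
  | succ n ih =>
    set f : ℕ → ℝ := fun k => (n - k * α) * genStirling α n k * α ^ k * risefac y 1 k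
    have hf : ∑ k ∈ range (n + 1), f (k + 1) = ∑ k ∈ range (n + 1), f k := by
      refine sum_range_succ_comp_succ_eq_sum_range ?_ ?_
      · rcases n with _ | n <;> simp [f, genStirling_succ_zero]
      · simp [f, genStirling_eq_zero_of_lt α n.lt_succ_self]
    calc risefac (y * α) 1 (n + 1)
        = ∑ k ∈ range (n + 1), (α * genStirling α n k * α ^ k * risefac y 1 (k + 1) + f k) := by
          rw [risefac_one_succ, ih, sum_mul]
          refine sum_congr rfl fun k _ => ?_
          simp only [f, risefac_one_succ]
          ring
      _ = ∑ k ∈ range (n + 1),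
            (α * genStirling α n k * α ^ k * risefac y 1 (k + 1) + f (k + 1)) := by
          rw [sum_add_distrib, sum_add_distrib, hf]
      _ = ∑ k ∈ range (n + 1),
            genStirling α (n + 1) (k + 1) * α ^ (k + 1) * risefac y 1 (k + 1) := by
          refine sum_congr rfl fun k _ => ?_
          simp only [f, genStirling_succ_succ]
          push_cast
          ring
      _ = ∑ k ∈ range (n + 2), genStirling α (n + 1) k * α ^ k * risefac y 1 k := by
          rw [sum_range_succ' _ (n + 1), genStirling_succ_zero, zero_mul, zero_mul, add_zero]

theorem genStirling_genFactorialCoeff_general (α : ℝ) (hα0 : 0 < α) (n : ℕ) :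
    (∀ y : ℝ, risefac (y * α) 1 n =
        ∑ k ∈ Finset.range (n + 1), genStirling α n k * α ^ k * risefac y 1 k)
    ∧ ∀ C : ℕ → ℝ,
        (∀ y : ℝ, risefac (α * y) 1 n =
          ∑ k ∈ Finset.range (n + 1), C k * risefac y 1 k) →
        ∀ k ≤ n, genStirling α n k = C k / α ^ k := by
  refine ⟨fun y => risefac_mul_eq_sum_genStirling α y n, fun C hC k hk => ?_⟩
  have hdiff (y : ℝ) :
      ∑ j ∈ range (n + 1), (genStirling α n j * α ^ j - C j) * risefac y 1 j = 0 := by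
    simp only [sub_mul, sum_sub_distrib, ← risefac_mul_eq_sum_genStirling, mul_comm y α, hC,
      sub_self]
  rw [eq_div_iff (pow_ne_zero k hα0.ne'), ← sub_eq_zero]
  exact eq_zero_of_forall_sum_mul_risefac_eq_zero hdiff k (Nat.lt_succ_of_le hk)

/-- For `0 < α < 1`: `(yα)_{n↑} = ∑_{k=0}^n S_{n,k}^{-1,-α} α^k (y)_{k↑}`; equivalently, if
`C(n,·;α)` are connection coefficients with `(αy)_{n↑} = ∑_k C(n,k;α)(y)_{k↑}`, then
`S_{n,k}^{-1,-α} = C(n,k;α)/α^k`. -/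
theorem genStirling_genFactorialCoeff (α : ℝ) (hα0 : 0 < α) (hα1 : α < 1) (n : ℕ) :
    (∀ y : ℝ, risefac (y * α) 1 n =
        ∑ k ∈ Finset.range (n + 1), genStirling α n k * α ^ k * risefac y 1 k)
    ∧ ∀ C : ℕ → ℝ,
        (∀ y : ℝ, risefac (α * y) 1 n =
          ∑ k ∈ Finset.range (n + 1), C k * risefac y 1 k) →
        ∀ k ≤ n, genStirling α n k = C k / α ^ k :=
  genStirling_genFactorialCoeff_general α hα0 n
end
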